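/- arXiv:2508.06396 — 6 statements merged into one kernel-verified Lean document; each statement's English description precedes it below -/
import Mathlib

section
/- Let ν be a quasi-stationary state for a quantum Markov semigroup T with respect to a subharmonic projection p₀, i.e. p₀^⊥ T_{t*}(ν) p₀^⊥ = tr(T_{t*}(ν) p₀^⊥) · ν for all t ≥ 0, with tr(T_{t*}(ν)p₀^⊥) > 0 for all t. Then there exists α ≥ 0 such that p₀^⊥ T_{t*}(ν) p₀^⊥ = e^{-αt} ν for all t ≥ 0. -/
/-!
Complete positivity and subharmonicity of `p₀` make the `p₀^⊥`-corner of `T_t(ρ)` depend only on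
the `p₀^⊥`-corner of `ρ`: the `p₀`-corner of `ρ` is mapped into the range of `p₀`, so the
positive `2 × 2` block matrix `(p₀^⊥ T_t(eᵢ ρ eⱼ) p₀^⊥)` with `e = (p₀, p₀^⊥)` has a vanishing
diagonal block, which kills the off-diagonal blocks. For `ρ = T_u(ν)`, whose corner is `s(u) • ν` by quasi-stationarity, this makes the
survival probability `s(t) = tr(T_t(ν) p₀^⊥)` multiplicative on `[0, ∞)`. Being continuous,
positive and at most `1`, it equals `e^{-α t}` with `α = -log s(1) ≥ 0`.
-/

open Matrix
open scoped ComplexOrder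

/-- A linear map on matrices is completely positive if all of its matrix
amplifications preserve positive semidefiniteness. -/
def IsCompletelyPositive {ι : Type*} [Fintype ι] [DecidableEq ι]
    (Φ : Matrix ι ι ℂ →ₗ[ℂ] Matrix ι ι ℂ) : Prop :=
  ∀ (k : ℕ) (M : Matrix (Fin k × ι) (Fin k × ι) ℂ), M.PosSemidef →
    (Matrix.of fun (p q : Fin k × ι) =>
      Φ (Matrix.of fun a b => M (p.1, a) (q.1, b)) p.2 q.2).PosSemidef

open scoped Kronecker

theorem Matrix.trace_mul_mul_of_isIdempotentElem {n R : Type*} [Fintype n] [CommRing R]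
    {r : Matrix n n R} (hr : IsIdempotentElem r) (X : Matrix n n R) :
    (r * X * r).trace = (X * r).trace := by
  rw [trace_mul_cycle, hr.eq, trace_mul_comm]

namespace Matrix.PosSemidef

variable {κ m n : Type*} [Fintype κ] [Fintype m] [Fintype n]

theorem trace_mul_nonneg_of_isStarProjection {X p : Matrix n n ℂ} (hX : X.PosSemidef)
    (hp : IsStarProjection p) : 0 ≤ (X * p).trace := by
  rw [← trace_mul_mul_of_isIdempotentElem hp.isIdempotentElem]
  simpa [hp.isSelfAdjoint.isHermitian.eq] using (hX.conjTranspose_mul_mul_same p).trace_nonneg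

theorem comp_mul_mul_conjTranspose {X : Matrix n n ℂ} (hX : X.PosSemidef)
    (e : κ → Matrix m n ℂ) : (comp κ κ m m ℂ (of fun i j => e i * X * (e j)ᴴ)).PosSemidef := by
  convert hX.conjTranspose_mul_mul_same (of fun c (jb : κ × m) => (e jb.1)ᴴ c jb.2) using 1
  ext ⟨i, a⟩ ⟨j, b⟩
  simp [mul_apply, Finset.sum_mul]

theorem comp_map_conjTranspose_mul_mul {B : Matrix κ κ (Matrix m m ℂ)}
    (hB : (comp κ κ m m ℂ B).PosSemidef) (A : Matrix m n ℂ) :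
    (comp κ κ n n ℂ (B.map fun Y => Aᴴ * Y * A)).PosSemidef := by
  classical
  convert hB.conjTranspose_mul_mul_same ((1 : Matrix κ κ ℂ) ⊗ₖ A) using 1
  ext ⟨i, a⟩ ⟨j, b⟩
  simp [mul_apply, kroneckerMap_apply, one_apply, Fintype.sum_prod_type, Finset.sum_mul, ite_mul,
    mul_ite, apply_ite (starRingEnd ℂ)]

theorem apply_eq_zero_of_diag_eq_zero {M : Matrix n n ℂ} (hM : M.PosSemidef) {i : n}
    (hi : M i i = 0) (j : n) : M j i = 0 := by
  classical
  have hv : M *ᵥ Pi.single i 1 = 0 := by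
    rw [← hM.dotProduct_mulVec_zero_iff]
    simpa [mulVec_single, dotProduct, Pi.single_apply] using hi
  simpa [mulVec_single] using congrFun hv j

theorem block_eq_zero_of_diag_block_eq_zero {B : Matrix κ κ (Matrix m m ℂ)}
    (hB : (comp κ κ m m ℂ B).PosSemidef) {i : κ} (hi : B i i = 0) (j : κ) :
    B j i = 0 ∧ B i j = 0 := by
  have hcol : B j i = 0 := by
    ext b a
    exact hB.apply_eq_zero_of_diag_eq_zero (i := (i, a)) (by simp [hi]) (j, b)
  refine ⟨hcol, ?_⟩
  ext a b
  simpa [hcol, eq_comm] using hB.isHermitian.apply (i, a) (j, b)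

end Matrix.PosSemidef

namespace IsCompletelyPositive

variable {ι : Type*} [Fintype ι] [DecidableEq ι] {Φ : Matrix ι ι ℂ →ₗ[ℂ] Matrix ι ι ℂ}

theorem posSemidef_map (hΦ : IsCompletelyPositive Φ) {X : Matrix ι ι ℂ} (hX : X.PosSemidef) :
    (Φ X).PosSemidef := by
  convert (hΦ 1 (X.submatrix Prod.snd Prod.snd) (hX.submatrix _)).submatrix
    fun a : ι => ((0 : Fin 1), a) using 2
  rfl

theorem posSemidef_comp_map (hΦ : IsCompletelyPositive Φ) {k : ℕ}
    {B : Matrix (Fin k) (Fin k) (Matrix ι ι ℂ)} (hB : (comp _ _ _ _ ℂ B).PosSemidef) :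
    (comp _ _ _ _ ℂ (B.map Φ)).PosSemidef :=
  hΦ k _ hB

theorem compl_mul_map_mul_compl (hΦ : IsCompletelyPositive Φ) {p : Matrix ι ι ℂ}
    (hp : IsStarProjection p) (hsub : ∀ ρ, p * ρ * p = ρ → p * Φ ρ * p = Φ ρ)
    {X : Matrix ι ι ℂ} (hX : X.PosSemidef) :
    (1 - p) * Φ X * (1 - p) = (1 - p) * Φ ((1 - p) * X * (1 - p)) * (1 - p) := by
  set q := 1 - p with hq_def
  have hqp : q * p = 0 := hp.one_sub_mul_self
  have hqH : qᴴ = q := hp.one_sub.isSelfAdjoint.isHermitian.eq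
  let e : Fin 2 → Matrix ι ι ℂ := ![p, q]
  have he : ∀ i, (e i)ᴴ = e i := by
    intro i
    fin_cases i
    exacts [hp.isSelfAdjoint.isHermitian.eq, hqH]
  have hblocks : (comp _ _ _ _ ℂ (of fun i j => q * Φ (e i * X * e j) * q)).PosSemidef := by
    have hΦblocks := hΦ.posSemidef_comp_map (hX.comp_mul_mul_conjTranspose e)
    convert hΦblocks.comp_map_conjTranspose_mul_mul q using 2
    ext i j : 1
    simp [he, hqH]
  have h00 : q * Φ (p * X * p) * q = 0 := by
    have hfix : p * (p * X * p) * p = p * X * p := by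
      simp only [← mul_assoc, hp.isIdempotentElem.eq]
      rw [mul_assoc _ p p, hp.isIdempotentElem.eq]
    rw [← hsub _ hfix]
    simp [← mul_assoc, hqp]
  obtain ⟨h10, h01⟩ := hblocks.block_eq_zero_of_diag_block_eq_zero (i := 0) h00 1
  simp only [of_apply, e, Matrix.cons_val_zero, Matrix.cons_val_one] at h10 h01
  have hX_split : X = p * X * p + p * X * q + q * X * p + q * X * q := by
    rw [hq_def]; noncomm_ring
  conv_lhs => rw [hX_split]
  simp only [map_add, mul_add, add_mul, h00, h01, h10, zero_add]

theorem trace_map_mul_compl (hΦ : IsCompletelyPositive Φ) {p : Matrix ι ι ℂ}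
    (hp : IsStarProjection p) (hsub : ∀ ρ, p * ρ * p = ρ → p * Φ ρ * p = Φ ρ)
    {ρ ν : Matrix ι ι ℂ} (hρ : ρ.PosSemidef) {c : ℂ} (hρν : (1 - p) * ρ * (1 - p) = c • ν) :
    (Φ ρ * (1 - p)).trace = c * (Φ ν * (1 - p)).trace := by
  have hq := hp.one_sub.isIdempotentElem
  rw [← trace_mul_mul_of_isIdempotentElem hq, hΦ.compl_mul_map_mul_compl hp hsub hρ, hρν,
    map_smul, Matrix.mul_smul, Matrix.smul_mul, trace_smul, trace_mul_mul_of_isIdempotentElem hq,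
    smul_eq_mul]

end IsCompletelyPositive

theorem eq_mul_apply_one_of_map_add {g : ℝ → ℝ} (hg : ContinuousOn g (Set.Ici 0))
    (hadd : ∀ x, 0 ≤ x → ∀ y, 0 ≤ y → g (x + y) = g x + g y) {t : ℝ} (ht : 0 ≤ t) :
    g t = t * g 1 := by
  have hadd3 : ∀ a b c : ℝ, 0 ≤ a → 0 ≤ b → 0 ≤ c → g (a + b + c) = g a + g b + g c :=
    fun a b c ha hb hc => by rw [hadd _ (add_nonneg ha hb) _ hc, hadd _ ha _ hb]
  -- the odd extension of `g` is additive on all of `ℝ`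
  let G : ℝ →+ ℝ :=
    { toFun := fun x => g (max x 0) - g (max (-x) 0)
      map_zero' := by simp
      map_add' := fun x y => by
        have key :
            max x 0 + max y 0 + max (-(x + y)) 0 = max (-x) 0 + max (-y) 0 + max (x + y) 0 := by
          linarith [max_zero_sub_max_neg_zero_eq_self x, max_zero_sub_max_neg_zero_eq_self y,
            max_zero_sub_max_neg_zero_eq_self (x + y)]
        have := congrArg g key
        rw [hadd3 _ _ _ (le_max_right _ _) (le_max_right _ _) (le_max_right _ _),
          hadd3 _ _ _ (le_max_right _ _) (le_max_right _ _) (le_max_right _ _)] at this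
        show g (max (x + y) 0) - g (max (-(x + y)) 0)
          = g (max x 0) - g (max (-x) 0) + (g (max y 0) - g (max (-y) 0))
        linarith }
  have hG : Continuous G :=
    (hg.comp_continuous (continuous_id.max continuous_const) fun x => le_max_right x 0).sub
      (hg.comp_continuous (continuous_neg.max continuous_const) fun x => le_max_right (-x) 0)
  have hg0 : g 0 = 0 := by simpa using hadd 0 le_rfl 0 le_rfl
  have hGg : ∀ x, 0 ≤ x → G x = g x := fun x hx => by
    simp [G, max_eq_left hx, max_eq_right (neg_nonpos.mpr hx), hg0]
  rw [← hGg t ht, ← hGg 1 zero_le_one, ← smul_eq_mul, ← map_real_smul G hG, smul_eq_mul, mul_one]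

theorem eq_rpow_of_map_add_eq_mul {f : ℝ → ℝ} (hf : ContinuousOn f (Set.Ici 0))
    (hpos : ∀ t, 0 ≤ t → 0 < f t) (hmul : ∀ x, 0 ≤ x → ∀ y, 0 ≤ y → f (x + y) = f x * f y)
    {t : ℝ} (ht : 0 ≤ t) : f t = f 1 ^ t := by
  have hlog : Real.log (f t) = t * Real.log (f 1) :=
    eq_mul_apply_one_of_map_add (g := fun x => Real.log (f x))
      (hf.log fun x hx => (hpos x hx).ne')
      (fun x hx y hy => by rw [hmul x hx y hy, Real.log_mul (hpos x hx).ne' (hpos y hy).ne']) ht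
  rw [Real.rpow_def_of_pos (hpos 1 zero_le_one), mul_comm, ← hlog, Real.exp_log (hpos t ht)]

theorem qss_exponential_decay_general {ι : Type*} [Fintype ι] [DecidableEq ι]
    (T : ℝ → Matrix ι ι ℂ →ₗ[ℂ] Matrix ι ι ℂ)
    (hsem : ∀ t, 0 ≤ t → ∀ s, 0 ≤ s → T (t + s) = (T t).comp (T s))
    (hTP : ∀ t, 0 ≤ t → ∀ x : Matrix ι ι ℂ, (T t x).trace = x.trace)
    (hCP : ∀ t, 0 ≤ t → IsCompletelyPositive (T t))
    (p₀ : Matrix ι ι ℂ) (hproj : p₀ * p₀ = p₀) (hherm : p₀.IsHermitian)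
    -- `p₀` is subharmonic: states supported in the range of `p₀` stay there
    (hsub : ∀ t, 0 ≤ t → ∀ ρ : Matrix ι ι ℂ, p₀ * ρ * p₀ = ρ →
      p₀ * T t ρ * p₀ = T t ρ)
    (ν : Matrix ι ι ℂ) (hν : ν.PosSemidef) (hν1 : ν.trace = 1)
    (hcont : Continuous fun t : ℝ => T t ν)
    -- `ν` is a quasi-stationary state with respect to `p₀`
    (hQSS : ∀ t, 0 ≤ t →
      (1 - p₀) * T t ν * (1 - p₀) = (Matrix.trace (T t ν * (1 - p₀))) • ν)
    -- the survival probability is strictly positive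
    (hsurv : ∀ t, 0 ≤ t → 0 < (Matrix.trace (T t ν * (1 - p₀))).re) :
    ∃ α : ℝ, 0 ≤ α ∧ ∀ t, 0 ≤ t →
      (1 - p₀) * T t ν * (1 - p₀) = (Real.exp (-(α * t)) : ℂ) • ν := by
  have hp : IsStarProjection p₀ := ⟨hproj, hherm.isSelfAdjoint⟩
  set f : ℝ → ℝ := fun t => (T t ν * (1 - p₀)).trace.re
  have hTν : ∀ t, 0 ≤ t → (T t ν).PosSemidef := fun t ht => (hCP t ht).posSemidef_map hν
  have hf_real : ∀ t, 0 ≤ t → (T t ν * (1 - p₀)).trace = f t := fun t ht =>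
    Complex.eq_re_of_ofReal_le (r := 0) <| by
      exact_mod_cast (hTν t ht).trace_mul_nonneg_of_isStarProjection hp.one_sub
  have hf_mul : ∀ t, 0 ≤ t → ∀ u, 0 ≤ u → f (t + u) = f t * f u := by
    intro t ht u hu
    have h := (hCP u hu).trace_map_mul_compl hp (hsub u hu) (hTν t ht) (hQSS t ht)
    rw [← LinearMap.comp_apply, ← hsem u hu t ht, add_comm, hf_real _ (add_nonneg ht hu),
      hf_real t ht, hf_real u hu] at h
    exact_mod_cast h
  have hf_le_one : f 1 ≤ 1 := by
    have hsplit : (T 1 ν * (1 - p₀)).trace + (T 1 ν * p₀).trace = 1 := by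
      rw [← trace_add, ← Matrix.mul_add, sub_add_cancel, Matrix.mul_one, hTP 1 zero_le_one, hν1]
    have hp_nonneg := (Complex.nonneg_iff.1
      ((hTν 1 zero_le_one).trace_mul_nonneg_of_isStarProjection hp)).1
    have := congrArg Complex.re hsplit
    simp only [Complex.add_re, Complex.one_re] at this
    linarith
  have hf_cont : Continuous f :=
    Complex.continuous_re.comp (hcont.matrix_mul continuous_const).matrix_trace
  refine ⟨-Real.log (f 1), neg_nonneg.2 (Real.log_nonpos (hsurv 1 zero_le_one).le hf_le_one),
    fun t ht => ?_⟩
  rw [hQSS t ht, hf_real t ht, eq_rpow_of_map_add_eq_mul hf_cont.continuousOn hsurv hf_mul ht,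
    Real.rpow_def_of_pos (hsurv 1 zero_le_one), neg_mul, neg_neg]

/-- If `ν` is a quasi-stationary state for a quantum Markov semigroup `T` (in the
Schrödinger picture, i.e. `T t` is the predual map `T_{t*}`) with respect to a
subharmonic projection `p₀`, and the survival probability is strictly positive,
then there is `α ≥ 0` with `p₀^⊥ T_{t*}(ν) p₀^⊥ = e^{-α t} ν` for all `t ≥ 0`. -/
theorem qss_exponential_decay {ι : Type*} [Fintype ι] [DecidableEq ι]
    (T : ℝ → Matrix ι ι ℂ →ₗ[ℂ] Matrix ι ι ℂ)
    (hT0 : T 0 = LinearMap.id)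
    (hsem : ∀ t, 0 ≤ t → ∀ s, 0 ≤ s → T (t + s) = (T t).comp (T s))
    (hTP : ∀ t, 0 ≤ t → ∀ x : Matrix ι ι ℂ, (T t x).trace = x.trace)
    (hCP : ∀ t, 0 ≤ t → IsCompletelyPositive (T t))
    (p₀ : Matrix ι ι ℂ) (hproj : p₀ * p₀ = p₀) (hherm : p₀.IsHermitian)
    -- `p₀` is subharmonic: states supported in the range of `p₀` stay there
    (hsub : ∀ t, 0 ≤ t → ∀ ρ : Matrix ι ι ℂ, p₀ * ρ * p₀ = ρ →
      p₀ * T t ρ * p₀ = T t ρ)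
    (ν : Matrix ι ι ℂ) (hν : ν.PosSemidef) (hν1 : ν.trace = 1)
    (hsupp : (1 - p₀) * ν * (1 - p₀) = ν)
    (hcont : Continuous fun t : ℝ => T t ν)
    -- `ν` is a quasi-stationary state with respect to `p₀`
    (hQSS : ∀ t, 0 ≤ t →
      (1 - p₀) * T t ν * (1 - p₀) = (Matrix.trace (T t ν * (1 - p₀))) • ν)
    -- the survival probability is strictly positive
    (hsurv : ∀ t, 0 ≤ t → 0 < (Matrix.trace (T t ν * (1 - p₀))).re) :
    ∃ α : ℝ, 0 ≤ α ∧ ∀ t, 0 ≤ t →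
      (1 - p₀) * T t ν * (1 - p₀) = (Real.exp (-(α * t)) : ℂ) • ν :=
  qss_exponential_decay_general T hsem hTP hCP p₀ hproj hherm hsub ν hν hν1 hcont hQSS hsurv
end

section
/- If p₀ is a subharmonic projection for a quantum Markov semigroup T and ν is a quasi-stationary state with p₀^⊥ T_{t*}(ν) p₀^⊥ = e^{-αt} ν, and moreover p₀ is absorbing (i.e. tr(T_{t*}(ρ) p₀) → 1 as t → ∞ for every state ρ), then α > 0. -/
open Matrix
open scoped ComplexOrder

/-- If `p₀` is a subharmonic projection for the quantum Markov semigroup `T`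
(given here in the Schrödinger picture, `T t = T_{t*}`), `ν` is a
quasi-stationary state with `p₀^⊥ T_{t*}(ν) p₀^⊥ = e^{-α t} ν`, and `p₀` is
absorbing (`tr(T_{t*}(ρ) p₀) → 1` for every state `ρ`), then `α > 0`. -/
theorem qss_absorbing_rate_pos {ι : Type*} [Fintype ι] [DecidableEq ι]
    (T : ℝ → Matrix ι ι ℂ →ₗ[ℂ] Matrix ι ι ℂ)
    (hT0 : T 0 = LinearMap.id)
    (hsem : ∀ t, 0 ≤ t → ∀ s, 0 ≤ s → T (t + s) = (T t).comp (T s))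
    (hTP : ∀ t, 0 ≤ t → ∀ x : Matrix ι ι ℂ, (T t x).trace = x.trace)
    (hCP : ∀ t, 0 ≤ t → IsCompletelyPositive (T t))
    (p₀ : Matrix ι ι ℂ) (hproj : p₀ * p₀ = p₀) (hherm : p₀.IsHermitian)
    -- `p₀` is subharmonic: states supported in the range of `p₀` stay there
    (hsub : ∀ t, 0 ≤ t → ∀ ρ : Matrix ι ι ℂ, p₀ * ρ * p₀ = ρ →
      p₀ * T t ρ * p₀ = T t ρ)
    (ν : Matrix ι ι ℂ) (hν : ν.PosSemidef) (hν1 : ν.trace = 1)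
    (hsupp : (1 - p₀) * ν * (1 - p₀) = ν)
    (α : ℝ) (hα : 0 ≤ α)
    -- `ν` is a quasi-stationary state with rate `α`
    (hQSS : ∀ t, 0 ≤ t →
      (1 - p₀) * T t ν * (1 - p₀) = (Real.exp (-(α * t)) : ℂ) • ν)
    -- `p₀` is absorbing
    (habs : ∀ ρ : Matrix ι ι ℂ, ρ.PosSemidef → ρ.trace = 1 →
      Filter.Tendsto (fun t : ℝ => (Matrix.trace (T t ρ * p₀)).re)
        Filter.atTop (nhds 1)) :
    0 < α := by
  by_contra h
  have hα0 : α = 0 := le_antisymm (not_lt.mp h) hα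
  subst hα0
  -- For t ≥ 0, tr(T t ν * p₀) = 0.
  have hq : ∀ t : ℝ, 0 ≤ t → Matrix.trace (T t ν * p₀) = 0 := by
    intro t ht
    have h1 : (1 - p₀) * T t ν * (1 - p₀) = ν := by
      have := hQSS t ht
      simpa using this
    have hp2 : (1 - p₀) * (1 - p₀) = 1 - p₀ := by
      simp [sub_mul, mul_sub, hproj]
    have h2 : Matrix.trace (T t ν * (1 - p₀)) = 1 := by
      calc Matrix.trace (T t ν * (1 - p₀))
          = Matrix.trace (T t ν * ((1 - p₀) * (1 - p₀))) := by rw [hp2]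
        _ = Matrix.trace ((1 - p₀) * (1 - p₀) * T t ν) := by
            rw [Matrix.trace_mul_comm, Matrix.mul_assoc]
        _ = Matrix.trace ((1 - p₀) * T t ν * (1 - p₀)) :=
            (Matrix.trace_mul_cycle _ _ _).symm
        _ = 1 := by rw [h1, hν1]
    have h3 : Matrix.trace (T t ν) = 1 := by rw [hTP t ht ν, hν1]
    have : Matrix.trace (T t ν * p₀) = Matrix.trace (T t ν)
        - Matrix.trace (T t ν * (1 - p₀)) := by
      rw [Matrix.mul_sub, Matrix.trace_sub, Matrix.mul_one]; ring
    rw [this, h2, h3]; ring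
  have habsν := habs ν hν hν1
  have h0 : Filter.Tendsto (fun t : ℝ => (Matrix.trace (T t ν * p₀)).re)
      Filter.atTop (nhds 0) := by
    apply Filter.Tendsto.congr' _ tendsto_const_nhds
    filter_upwards [Filter.eventually_ge_atTop (0 : ℝ)] with t ht
    rw [hq t ht, Complex.zero_re]
  exact zero_ne_one (tendsto_nhds_unique h0 habsν)
end

section
/- Let p₀ be a subharmonic projection for the predual semigroup T_{t*} (i.e. states supported in range(p₀) stay supported there). Then for every state ρ and every t ≥ 0, p₀^⊥ T_{t*}(p₀^⊥ ρ p₀^⊥) p₀^⊥ = p₀^⊥ T_{t*}(ρ') p₀^⊥ for ρ' = p₀^⊥ ρ p₀^⊥; in particular the maps S_t(x) := p₀^⊥ T_{t*}(x) p₀^⊥ on the corner p₀^⊥ L¹(h) p₀^⊥ form a semigroup: S_{t+s} = S_t ∘ S_s. -/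
open Matrix
open scoped ComplexOrder

theorem Complex.eq_zero_of_forall_nonneg_add_ofReal_mul {a b : ℂ}
    (h : ∀ r : ℝ, 0 ≤ a + r * b) : b = 0 := by
  have ha : 0 ≤ a := by simpa using h 0
  have hab : 0 ≤ a + b := by simpa using h 1
  have him : b.im = 0 := by
    have ha_im := (Complex.le_def.mp ha).2
    have hab_im := (Complex.le_def.mp hab).2
    rw [zero_im, add_im] at hab_im
    rw [zero_im] at ha_im
    linarith
  refine Complex.ext ?_ him
  by_contra hre
  have hneg := (Complex.le_def.mp (h (-(a.re + 1) / b.re))).1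
  simp only [zero_re, add_re, re_ofReal_mul] at hneg hre
  rw [div_mul_cancel₀ _ hre] at hneg
  linarith

section

variable {n : Type*} [Fintype n]

theorem Matrix.eq_zero_of_forall_posSemidef_add_smul {A E : Matrix n n ℂ}
    (h : ∀ r : ℝ, (A + (r : ℂ) • E).PosSemidef) : E = 0 := by
  have hform : ∀ x, star x ⬝ᵥ E *ᵥ x = 0 := fun x =>
    Complex.eq_zero_of_forall_nonneg_add_ofReal_mul fun r => by
      simpa [add_mulVec, dotProduct_add, smul_mulVec, dotProduct_smul] using
        (h r).dotProduct_mulVec_nonneg x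
  have hE : E.PosSemidef := by
    have hherm := (h 1).1.sub (h 0).1
    simp only [Complex.ofReal_one, one_smul, Complex.ofReal_zero, zero_smul, add_zero,
      add_sub_cancel_left] at hherm
    exact .of_dotProduct_mulVec_nonneg hherm fun x => (hform x).ge
  exact ext_iff_mulVec.mpr fun x => by simpa using (hE.dotProduct_mulVec_zero_iff x).mp (hform x)

open scoped MatrixOrder Matrix.Norms.L2Operator in
theorem Matrix.linearMap_ext_posSemidef [DecidableEq n] {M : Type*} [AddCommGroup M] [Module ℂ M]
    {f g : Matrix n n ℂ →ₗ[ℂ] M} (h : ∀ ρ : Matrix n n ℂ, ρ.PosSemidef → f ρ = g ρ) : f = g :=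
  LinearMap.ext_on CStarAlgebra.span_nonneg fun ρ hρ => h ρ (Matrix.nonneg_iff_posSemidef.mp hρ)

theorem IsCompletelyPositive.posSemidef_apply [DecidableEq n] {Φ : Matrix n n ℂ →ₗ[ℂ] Matrix n n ℂ}
    (hΦ : IsCompletelyPositive Φ) {ρ : Matrix n n ℂ} (hρ : ρ.PosSemidef) : (Φ ρ).PosSemidef :=
  (hΦ 1 (ρ.submatrix Prod.snd Prod.snd) (hρ.submatrix _)).submatrix
    fun i : n => ((0 : Fin 1), i)

variable [DecidableEq n] {Φ : Matrix n n ℂ →ₗ[ℂ] Matrix n n ℂ} {p : Matrix n n ℂ}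

lemma one_sub_mul_map_corner_mul_one_sub_eq_zero (hp : IsStarProjection p)
    (hsub : ∀ ρ, p * ρ * p = ρ → p * Φ ρ * p = Φ ρ) (ρ : Matrix n n ℂ) :
    (1 - p) * Φ (p * ρ * p) * (1 - p) = 0 := by
  have hcorner : p * (p * ρ * p) * p = p * ρ * p := by
    simp only [← mul_assoc, hp.isIdempotentElem.eq]
    rw [mul_assoc, hp.isIdempotentElem.eq]
  rw [← hsub _ hcorner]
  simp only [mul_assoc, hp.mul_one_sub_self, mul_zero]

lemma one_sub_mul_map_offDiag_mul_one_sub_eq_zero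
    (hΦ : ∀ ρ : Matrix n n ℂ, ρ.PosSemidef → (Φ ρ).PosSemidef) (hp : IsStarProjection p)
    (hsub : ∀ ρ, p * ρ * p = ρ → p * Φ ρ * p = Φ ρ) {ρ : Matrix n n ℂ} (hρ : ρ.PosSemidef) :
    (1 - p) * Φ ((1 - p) * ρ * p + p * ρ * (1 - p)) * (1 - p) = 0 := by
  set q := 1 - p with hq_def
  refine eq_zero_of_forall_posSemidef_add_smul (A := q * Φ (q * ρ * q) * q) fun r => ?_
  set u := q + (r : ℂ) • p
  have hq : qᴴ = q := hp.one_sub.isSelfAdjoint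
  have hp' : pᴴ = p := hp.isSelfAdjoint
  have hu : uᴴ = u := by
    simp only [u, conjTranspose_add, conjTranspose_smul, hq, hp', Complex.star_def,
      Complex.conj_ofReal]
  have hexpand : u * ρ * u =
      q * ρ * q + (r : ℂ) • (q * ρ * p + p * ρ * q) + ((r : ℂ) * r) • (p * ρ * p) := by
    simp only [u, add_mul, mul_add, smul_mul_assoc, mul_smul_comm, smul_smul, smul_add]
    abel
  have hpos := (hΦ _ (hρ.mul_mul_conjTranspose_same u)).mul_mul_conjTranspose_same q
  rw [hu, hq, hexpand, map_add, map_add, map_smul, map_smul] at hpos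
  simpa only [mul_add, add_mul, mul_smul_comm, smul_mul_assoc, hq_def,
    one_sub_mul_map_corner_mul_one_sub_eq_zero hp hsub, smul_zero, add_zero] using hpos

theorem one_sub_mul_map_compress_mul_one_sub
    (hΦ : ∀ ρ : Matrix n n ℂ, ρ.PosSemidef → (Φ ρ).PosSemidef) (hp : IsStarProjection p)
    (hsub : ∀ ρ, p * ρ * p = ρ → p * Φ ρ * p = Φ ρ) (ρ : Matrix n n ℂ) :
    (1 - p) * Φ ((1 - p) * ρ * (1 - p)) * (1 - p) = (1 - p) * Φ ρ * (1 - p) := by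
  set q := 1 - p with hq_def
  suffices h : LinearMap.mulLeftRight ℂ (q, q) ∘ₗ Φ ∘ₗ LinearMap.mulLeftRight ℂ (q, q) =
      LinearMap.mulLeftRight ℂ (q, q) ∘ₗ Φ by
    simpa using LinearMap.congr_fun h ρ
  refine linearMap_ext_posSemidef fun σ hσ => ?_
  have hdecomp : σ = q * σ * q + (q * σ * p + p * σ * q) + p * σ * p := by
    calc σ = (q + p) * σ * (q + p) := by rw [hq_def, sub_add_cancel, one_mul, mul_one]
      _ = q * σ * q + (q * σ * p + p * σ * q) + p * σ * p := by
        simp only [add_mul, mul_add]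
        abel
  simp only [LinearMap.comp_apply, LinearMap.mulLeftRight_apply]
  conv_rhs => rw [hdecomp]
  rw [map_add, map_add, mul_add, mul_add, add_mul, add_mul,
    one_sub_mul_map_offDiag_mul_one_sub_eq_zero hΦ hp hsub hσ,
    one_sub_mul_map_corner_mul_one_sub_eq_zero hp hsub, add_zero, add_zero]

end

theorem corner_semigroup_general {ι : Type*} [Fintype ι] [DecidableEq ι]
    (T : ℝ → Matrix ι ι ℂ →ₗ[ℂ] Matrix ι ι ℂ)
    (hsem : ∀ t, 0 ≤ t → ∀ s, 0 ≤ s → T (t + s) = (T t).comp (T s))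
    (hCP : ∀ t, 0 ≤ t → IsCompletelyPositive (T t))
    (p₀ : Matrix ι ι ℂ) (hproj : p₀ * p₀ = p₀) (hherm : p₀.IsHermitian)
    -- `p₀` is subharmonic: states supported in the range of `p₀` stay there
    (hsub : ∀ t, 0 ≤ t → ∀ ρ : Matrix ι ι ℂ, p₀ * ρ * p₀ = ρ →
      p₀ * T t ρ * p₀ = T t ρ) :
    -- the corner compression only sees `p₀^⊥ ρ p₀^⊥`
    (∀ t, 0 ≤ t → ∀ ρ : Matrix ι ι ℂ, ρ.PosSemidef → ρ.trace = 1 →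
      (1 - p₀) * T t ((1 - p₀) * ρ * (1 - p₀)) * (1 - p₀) =
        (1 - p₀) * T t ρ * (1 - p₀)) ∧
    -- semigroup property of `S_t(x) = p₀^⊥ T_t(x) p₀^⊥` on the corner
    (∀ t, 0 ≤ t → ∀ s, 0 ≤ s → ∀ x : Matrix ι ι ℂ,
      (1 - p₀) * x * (1 - p₀) = x →
      (1 - p₀) * T (t + s) x * (1 - p₀) =
        (1 - p₀) * T t ((1 - p₀) * T s x * (1 - p₀)) * (1 - p₀)) := by
  have hp : IsStarProjection p₀ := ⟨hproj, hherm⟩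
  have hcompress : ∀ t, 0 ≤ t → ∀ ρ : Matrix ι ι ℂ,
      (1 - p₀) * T t ((1 - p₀) * ρ * (1 - p₀)) * (1 - p₀) = (1 - p₀) * T t ρ * (1 - p₀) :=
    fun t ht => one_sub_mul_map_compress_mul_one_sub
      (fun _ hρ => (hCP t ht).posSemidef_apply hρ) hp (hsub t ht)
  refine ⟨fun t ht ρ _ _ => hcompress t ht ρ, fun t ht s hs x _ => ?_⟩
  rw [hsem t ht s hs, LinearMap.comp_apply, hcompress t ht]

/-- If `p₀` is subharmonic for the predual semigroup `T_{t*}` (states supported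
in `range p₀` stay supported there), then for every state `ρ` and `t ≥ 0`,
`p₀^⊥ T_{t*}(p₀^⊥ ρ p₀^⊥) p₀^⊥ = p₀^⊥ T_{t*}(ρ) p₀^⊥`; in particular the maps
`S_t(x) = p₀^⊥ T_{t*}(x) p₀^⊥` form a semigroup on the corner. -/
theorem corner_semigroup {ι : Type*} [Fintype ι] [DecidableEq ι]
    (T : ℝ → Matrix ι ι ℂ →ₗ[ℂ] Matrix ι ι ℂ)
    (hT0 : T 0 = LinearMap.id)
    (hsem : ∀ t, 0 ≤ t → ∀ s, 0 ≤ s → T (t + s) = (T t).comp (T s))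
    (hTP : ∀ t, 0 ≤ t → ∀ x : Matrix ι ι ℂ, (T t x).trace = x.trace)
    (hCP : ∀ t, 0 ≤ t → IsCompletelyPositive (T t))
    (p₀ : Matrix ι ι ℂ) (hproj : p₀ * p₀ = p₀) (hherm : p₀.IsHermitian)
    -- `p₀` is subharmonic: states supported in the range of `p₀` stay there
    (hsub : ∀ t, 0 ≤ t → ∀ ρ : Matrix ι ι ℂ, p₀ * ρ * p₀ = ρ →
      p₀ * T t ρ * p₀ = T t ρ) :
    -- the corner compression only sees `p₀^⊥ ρ p₀^⊥`
    (∀ t, 0 ≤ t → ∀ ρ : Matrix ι ι ℂ, ρ.PosSemidef → ρ.trace = 1 →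
      (1 - p₀) * T t ((1 - p₀) * ρ * (1 - p₀)) * (1 - p₀) =
        (1 - p₀) * T t ρ * (1 - p₀)) ∧
    -- semigroup property of `S_t(x) = p₀^⊥ T_t(x) p₀^⊥` on the corner
    (∀ t, 0 ≤ t → ∀ s, 0 ≤ s → ∀ x : Matrix ι ι ℂ,
      (1 - p₀) * x * (1 - p₀) = x →
      (1 - p₀) * T (t + s) x * (1 - p₀) =
        (1 - p₀) * T t ((1 - p₀) * T s x * (1 - p₀)) * (1 - p₀)) :=
  corner_semigroup_general T hsem hCP p₀ hproj hherm hsub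
end

section
/- For the two-qubit generator L_*(ρ) = -i[H,ρ] + σ₁⁻ ρ σ₁⁺ - ½{σ₁⁺σ₁⁻,ρ} with H = (ω/2)(σ₁⁺σ₂⁻+σ₁⁻σ₂⁺) and |ω| ≥ 1/2, the matrix ν with entries ν(|01⟩,|01⟩) = ν(|10⟩,|10⟩) = 1/2, ν(|01⟩,|10⟩) = x + i/(4ω), ν(|10⟩,|01⟩) = x - i/(4ω) (all other entries 0), where x ∈ ℝ with x² ≤ (4ω²-1)/(16ω²), is a positive semidefinite matrix of trace 1 satisfying p₀^⊥ L_*(ν) p₀^⊥ = -(1/2) ν, where p₀ = |00⟩⟨00|. -/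
/-!
On the single-excitation sector `span{|01⟩, |10⟩}` the matrix `ν` is `!![½, c; c̄, ½]` with
`c = x + i/(4ω)`, and it vanishes elsewhere. Such a block is positive semidefinite as soon as
`|c|² ≤ ¼` (it has an explicit Cholesky factor), and `|c|² = x² + 1/(16ω²) ≤ ¼` is exactly the
hypothesis on `x`. For the eigenvalue equation: the jump term `σ₁⁻ ν σ₁⁺` only feeds `|00⟩`,
which `p₀^⊥` removes; `-½{σ₁⁺σ₁⁻, ν}` halves the coherences and drains `½` from the population
of `|10⟩`; and `-i[H, ν]` moves population `ω Im c = ¼` from `|01⟩` to `|10⟩`, which is what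
brings both populations to `-¼`.
-/

open Matrix Complex

noncomputable section

/-- `σ₁⁻ = |0⟩⟨1| ⊗ 1` on `ℂ² ⊗ ℂ²`, in the basis `|00⟩,|01⟩,|10⟩,|11⟩`. -/
def sigma1m : Matrix (Fin 4) (Fin 4) ℂ :=
  !![0,0,1,0; 0,0,0,1; 0,0,0,0; 0,0,0,0]

/-- `σ₂⁻ = 1 ⊗ |0⟩⟨1|` on `ℂ² ⊗ ℂ²`, in the basis `|00⟩,|01⟩,|10⟩,|11⟩`. -/
def sigma2m : Matrix (Fin 4) (Fin 4) ℂ :=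
  !![0,1,0,0; 0,0,0,0; 0,0,0,1; 0,0,0,0]

/-- Hamiltonian `H = (ω/2)(σ₁⁺σ₂⁻ + σ₁⁻σ₂⁺)`. -/
def Ham (ω : ℝ) : Matrix (Fin 4) (Fin 4) ℂ :=
  ((ω : ℂ) / 2) • (sigma1mᴴ * sigma2m + sigma1m * sigma2mᴴ)

/-- The two-qubit GKLS generator with decay on the first site only:
`L_*(ρ) = -i[H,ρ] + σ₁⁻ ρ σ₁⁺ - ½{σ₁⁺σ₁⁻, ρ}`. -/
def Lstar (ω : ℝ) (ρ : Matrix (Fin 4) (Fin 4) ℂ) : Matrix (Fin 4) (Fin 4) ℂ :=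
  (-Complex.I) • (Ham ω * ρ - ρ * Ham ω) + sigma1m * ρ * sigma1mᴴ
    - (1 / 2 : ℂ) • (sigma1mᴴ * sigma1m * ρ + ρ * (sigma1mᴴ * sigma1m))


/-- The projection `p₀^⊥ = 1 - |00⟩⟨00|`. -/
def pperp : Matrix (Fin 4) (Fin 4) ℂ :=
  1 - Matrix.single (0 : Fin 4) (0 : Fin 4) (1 : ℂ)

open scoped ComplexOrder

theorem posSemidef_of_normSq_le {a b : ℝ} {c : ℂ} (ha : 0 < a) (hc : normSq c ≤ a * b) :
    (!![(a : ℂ), c; star c, (b : ℂ)]).PosSemidef := by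
  have hb : 0 ≤ b - normSq c / a := by
    rw [sub_nonneg, div_le_iff₀ ha]; linarith
  have hsqrt {r : ℝ} (hr : 0 ≤ r) : (√r : ℂ) * √r = r := by
    exact_mod_cast Real.mul_self_sqrt hr
  have hsa : (√a : ℂ) ≠ 0 := by exact_mod_cast (Real.sqrt_pos.2 ha).ne'
  set L : Matrix (Fin 2) (Fin 2) ℂ := !![(√a : ℂ), c / √a; 0, (√(b - normSq c / a) : ℂ)]
  have hcholesky : !![(a : ℂ), c; star c, (b : ℂ)] = Lᴴ * L := by
    ext i j
    fin_cases i <;> fin_cases j <;>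
      simp [L, Matrix.mul_apply, Fin.sum_univ_two, hsqrt ha.le, hsqrt hb, hsa, mul_div_cancel₀]
    rw [div_mul_div_comm, hsqrt ha.le, ← normSq_eq_conj_mul_self]
    field_simp
    ring
  rw [hcholesky]
  exact posSemidef_conjTranspose_mul_self L

def singleExcitationState (c : ℂ) : Matrix (Fin 4) (Fin 4) ℂ :=
  !![0, 0, 0, 0; 0, 1/2, c, 0; 0, star c, 1/2, 0; 0, 0, 0, 0]

theorem singleExcitationState_posSemidef {c : ℂ} (hc : normSq c ≤ 1 / 4) :
    (singleExcitationState c).PosSemidef := by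
  have hblock : (!![((1 / 2 : ℝ) : ℂ), c; star c, ((1 / 2 : ℝ) : ℂ)]).PosSemidef :=
    posSemidef_of_normSq_le (by norm_num) (by linarith)
  let B : Matrix (Fin 2) (Fin 4) ℂ := !![0, 1, 0, 0; 0, 0, 1, 0]
  have hembed : singleExcitationState c =
      Bᴴ * !![((1 / 2 : ℝ) : ℂ), c; star c, ((1 / 2 : ℝ) : ℂ)] * B := by
    ext i j
    fin_cases i <;> fin_cases j <;>
      simp [B, singleExcitationState, Matrix.mul_apply, Fin.sum_univ_two]
  rw [hembed]
  exact hblock.conjTranspose_mul_mul_same B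

theorem trace_singleExcitationState (c : ℂ) : (singleExcitationState c).trace = 1 := by
  simp [singleExcitationState, Matrix.trace, Fin.sum_univ_four]
  norm_num

theorem Ham_eq (ω : ℝ) :
    Ham ω = !![0, 0, 0, 0; 0, 0, (ω : ℂ) / 2, 0; 0, (ω : ℂ) / 2, 0, 0; 0, 0, 0, 0] := by
  ext i j
  fin_cases i <;> fin_cases j <;>
    simp [Ham, sigma1m, sigma2m, Matrix.mul_apply, Fin.sum_univ_four, vecMul, dotProduct,
      conjTranspose_apply]

theorem sigma1m_conjTranspose_mul_self :
    sigma1mᴴ * sigma1m = !![0, 0, 0, 0; 0, 0, 0, 0; 0, 0, 1, 0; 0, 0, 0, (1 : ℂ)] := by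
  ext i j
  fin_cases i <;> fin_cases j <;>
    simp [sigma1m, Matrix.mul_apply, Fin.sum_univ_four, conjTranspose_apply]

theorem pperp_eq : pperp = !![0, 0, 0, 0; 0, 1, 0, 0; 0, 0, 1, 0; 0, 0, 0, (1 : ℂ)] := by
  ext i j
  fin_cases i <;> fin_cases j <;> simp [pperp]

theorem pperp_mul_Lstar_singleExcitationState_mul_pperp {ω : ℝ} {c : ℂ} (h : ω * c.im = 1 / 4) :
    pperp * Lstar ω (singleExcitationState c) * pperp =
      (-(1 / 2) : ℂ) • singleExcitationState c := by
  have hcoh : I * ω * (starRingEnd ℂ c - c) = 1 / 2 := by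
    have hC : (ω : ℂ) * c.im = 1 / 4 := by rw [← ofReal_mul, h]; norm_num
    rw [← neg_sub, sub_conj]
    push_cast
    linear_combination (-2 * ω * c.im : ℂ) * I_sq + 2 * hC
  rw [Lstar, Ham_eq, sigma1m_conjTranspose_mul_self, pperp_eq]
  ext i j
  fin_cases i <;> fin_cases j <;>
    simp [singleExcitationState, sigma1m, Matrix.mul_apply, Fin.sum_univ_four, vecMul, dotProduct,
      conjTranspose_apply, vecHead, vecTail]
  all_goals first | ring1 | linear_combination (1 / 2 : ℂ) * hcoh

open scoped ComplexOrder in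
/-- For `|ω| ≥ 1/2`, the family of matrices `ν` below consists of states
(quasi-stationary states) satisfying `p₀^⊥ L_*(ν) p₀^⊥ = -(1/2) ν`. -/
theorem qss_family_large_omega (ω : ℝ) (hω : 1 / 2 ≤ |ω|)
    (x : ℝ) (hx : x ^ 2 ≤ (4 * ω ^ 2 - 1) / (16 * ω ^ 2)) :
    let ν : Matrix (Fin 4) (Fin 4) ℂ :=
      !![0,0,0,0;
         0, 1/2, (x : ℂ) + Complex.I / (4 * (ω : ℂ)), 0;
         0, (x : ℂ) - Complex.I / (4 * (ω : ℂ)), 1/2, 0;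
         0,0,0,0]
    ν.PosSemidef ∧ ν.trace = 1 ∧
      pperp * Lstar ω ν * pperp = (-(1 / 2) : ℂ) • ν := by
  intro ν
  have hω0 : ω ≠ 0 := by
    rintro rfl
    norm_num at hω
  set c : ℂ := x + I / (4 * ω)
  have hc : c = ⟨x, 1 / (4 * ω)⟩ := by
    apply Complex.ext <;> simp [c, div_re, div_im]
    field_simp
  have hν : ν = singleExcitationState c := by
    ext i j
    fin_cases i <;> fin_cases j <;> simp [ν, singleExcitationState, c]
    ring
  have him : ω * c.im = 1 / 4 := by
    rw [hc]; field_simp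
  have hnorm : normSq c ≤ 1 / 4 := by
    have : (4 * ω ^ 2 - 1) / (16 * ω ^ 2) = 1 / 4 - (1 / (4 * ω)) ^ 2 := by
      field_simp; ring
    rw [hc, normSq_mk]
    nlinarith
  rw [hν]
  exact ⟨singleExcitationState_posSemidef hnorm, trace_singleExcitationState c,
    pperp_mul_Lstar_singleExcitationState_mul_pperp him⟩

end
end

section
/- For the two-qubit generator L_*(ρ) = -i[H,ρ] + σ₁⁻ρσ₁⁺ - ½{σ₁⁺σ₁⁻,ρ}, H = (ω/2)(σ₁⁺σ₂⁻+σ₁⁻σ₂⁺), no state ν supported in range(p₀^⊥) (p₀ = |00⟩⟨00|) satisfies p₀^⊥ L_*(ν) p₀^⊥ = -ν; i.e. α = 1 is not a quasi-stationary decay rate for this model. -/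
/-!
On the one-excitation block `span {|01⟩, |10⟩}` the equation `p₀^⊥ L_*(ν) p₀^⊥ = -ν` is a system
of four linear equations in the entries of `ν`. The dissipator damps the coherences `ν₁₂, ν₂₁`
only at rate `½`, so they must vanish; the hopping term then forces `ν₁₁ = ν₂₂`; and the `|01⟩`
population, fed by the decay of `|11⟩`, gives `ν₁₁ + ν₃₃ = 0`. Together with `ν₀₀ = 0` and
`tr ν = 1` this yields `ν₃₃ = -1`, contradicting positivity.
-/

open Matrix Complex

noncomputable section

lemma pperp_eq_diagonal : pperp = diagonal ![0, 1, 1, 1] := by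
  ext i j
  fin_cases i <;> fin_cases j <;> simp [pperp]

lemma pperp_mul_mul_pperp_apply (M : Matrix (Fin 4) (Fin 4) ℂ) {i j : Fin 4}
    (hi : i ≠ 0) (hj : j ≠ 0) : (pperp * M * pperp) i j = M i j := by
  fin_cases i <;> fin_cases j <;> simp_all [pperp_eq_diagonal]

lemma pperp_mul_mul_pperp_apply_zero_zero (M : Matrix (Fin 4) (Fin 4) ℂ) :
    (pperp * M * pperp) 0 0 = 0 := by
  simp [pperp_eq_diagonal]

section Entries

variable (ω : ℝ) (ν : Matrix (Fin 4) (Fin 4) ℂ)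

lemma Lstar_apply_one_one : Lstar ω ν 1 1 = -I * (ω / 2) * (ν 2 1 - ν 1 2) + ν 3 3 := by
  simp [Lstar, Ham, sigma1m, sigma2m, mul_apply, vecMul, dotProduct, Fin.sum_univ_four]
  ring

lemma Lstar_apply_one_two : Lstar ω ν 1 2 = -I * (ω / 2) * (ν 2 2 - ν 1 1) - ν 1 2 / 2 := by
  simp [Lstar, Ham, sigma1m, sigma2m, mul_apply, vecMul, dotProduct, Fin.sum_univ_four]
  ring

lemma Lstar_apply_two_one : Lstar ω ν 2 1 = -I * (ω / 2) * (ν 1 1 - ν 2 2) - ν 2 1 / 2 := by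
  simp [Lstar, Ham, sigma1m, sigma2m, mul_apply, vecMul, dotProduct, Fin.sum_univ_four]
  ring

lemma Lstar_apply_two_two : Lstar ω ν 2 2 = -I * (ω / 2) * (ν 1 2 - ν 2 1) - ν 2 2 := by
  simp [Lstar, Ham, sigma1m, sigma2m, mul_apply, vecMul, dotProduct, Fin.sum_univ_four]
  ring

end Entries

lemma populations_of_pperp_mul_Lstar_mul_pperp_eq_neg {ω : ℝ} (hω : ω ≠ 0)
    {ν : Matrix (Fin 4) (Fin 4) ℂ} (h : pperp * Lstar ω ν * pperp = -ν) :
    ν 2 2 = ν 1 1 ∧ ν 1 1 + ν 3 3 = 0 := by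
  have entry : ∀ i j : Fin 4, i ≠ 0 → j ≠ 0 → Lstar ω ν i j = -ν i j := fun i j hi hj => by
    rw [← pperp_mul_mul_pperp_apply (Lstar ω ν) hi hj, h, neg_apply]
  have e11 := entry 1 1 (by decide) (by decide)
  have e12 := entry 1 2 (by decide) (by decide)
  have e21 := entry 2 1 (by decide) (by decide)
  have e22 := entry 2 2 (by decide) (by decide)
  rw [Lstar_apply_one_one] at e11
  rw [Lstar_apply_one_two] at e12
  rw [Lstar_apply_two_one] at e21
  rw [Lstar_apply_two_two] at e22
  have hopping : I * (ω / 2) ≠ 0 := by simp [hω]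
  have coherences_eq : ν 1 2 = ν 2 1 :=
    sub_eq_zero.mp <| (mul_eq_zero.mp (by linear_combination -e22)).resolve_left hopping
  have coherences_sum : ν 1 2 + ν 2 1 = 0 := by linear_combination 2 * e12 + 2 * e21
  have coherence_vanishes : ν 1 2 = 0 := by
    linear_combination (coherences_sum + coherences_eq) / 2
  have populations_eq : ν 2 2 = ν 1 1 :=
    sub_eq_zero.mp <| (mul_eq_zero.mp
      (by linear_combination -e12 + coherence_vanishes / 2)).resolve_left hopping
  exact ⟨populations_eq, by linear_combination e11 - I * (ω / 2) * coherences_eq⟩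

open scoped ComplexOrder in
/-- For the two-qubit model with decay on the first site only, no state `ν`
supported in `range p₀^⊥` satisfies `p₀^⊥ L_*(ν) p₀^⊥ = -ν`: `α = 1` is not a
quasi-stationary decay rate for this model. -/
theorem no_qss_rate_one (ω : ℝ) (hω : ω ≠ 0) :
    ∀ ν : Matrix (Fin 4) (Fin 4) ℂ, ν.PosSemidef → ν.trace = 1 →
      pperp * ν * pperp = ν →
      pperp * Lstar ω ν * pperp ≠ -ν := by
  intro ν hν htr hsupp heq
  obtain ⟨h22, h11⟩ := populations_of_pperp_mul_Lstar_mul_pperp_eq_neg hω heq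
  have h00 : ν 0 0 = 0 := by rw [← hsupp, pperp_mul_mul_pperp_apply_zero_zero]
  simp only [trace, diag, Fin.sum_univ_four] at htr
  have h33 : ν 3 3 = -1 := by linear_combination -htr + h00 + h22 + 2 * h11
  have h33_nonneg := hν.diag_nonneg (i := 3)
  rw [h33] at h33_nonneg
  norm_num [Complex.le_def] at h33_nonneg

end
end

section
/- Let ν be a state with p₀^⊥ T_{t*}(ν) p₀^⊥ = e^{-αt} ν for all t ≥ 0, and define S_{t*} as the semigroup generated by L_{0*} = L_* - ½{p₀^⊥, ·}. Then tr(S_{t*}(ν) p₀^⊥) = e^{-(1+α)t} for all t ≥ 0, via the Dyson expansion S_{t*} = Σ_{k≥0} (-1)^k ∫_{0≤t₁≤⋯≤t_k≤t} T_{(t-t_k)*}(p₀^⊥ ⋯ p₀^⊥ T_{t₁*}(·) p₀^⊥ ⋯ p₀^⊥) dt₁⋯dt_k compressed by p₀^⊥. -/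
/-
With `q = 1 - p₀`, the compression `f(t) = q S_t(ν) q` solves a closed linear equation.
For a positive map `Φ` preserving the `p₀`-corner and `σ ≥ 0`, the element
`q Φ((p₀ + t q) σ (p₀ + t q)) q ≥ 0` is linear plus quadratic in the real `t` with vanishing
constant term, so its linear term `q Φ(p₀ σ q + q σ p₀) q` is zero. As positive elements span,
`q Φ(x) q = q Φ(q x q) q` for all `x`; differentiating at `t = 0` gives `q L(x) q = q L(q x q) q`
and `q L(ν) q = -α ν`. Since `q {q, y} q = 2 q y q`, we get `f' = q L(f) q - f`, which is also
solved by `e^{-(1+α)t} ν`; uniqueness for this linear ODE and `tr ν = 1` conclude.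
-/

open Matrix
open scoped ComplexOrder

open Filter Topology Set
open scoped MatrixOrder Matrix.Norms.L2Operator

theorem nonneg_of_forall_pos_le_add_smul {E : Type*} [AddCommGroup E] [Module ℝ E]
    [TopologicalSpace E] [ContinuousAdd E] [ContinuousSMul ℝ E] [Preorder E]
    [ClosedIciTopology E] {x y : E} (h : ∀ t : ℝ, 0 < t → 0 ≤ x + t • y) : 0 ≤ x := by
  have hlim : Tendsto (fun t : ℝ => x + t • y) (𝓝[>] 0) (𝓝 x) := by
    have : Continuous fun t : ℝ => x + t • y := by fun_prop
    simpa using tendsto_nhdsWithin_of_tendsto_nhds (this.tendsto 0)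
  exact ge_of_tendsto hlim (eventually_nhdsWithin_of_forall h)

section CStarAlgebra

variable {A : Type*} [CStarAlgebra A] [PartialOrder A] [StarOrderedRing A]

theorem eq_zero_of_forall_nonneg_smul_add_sq_smul {x y : A}
    (h : ∀ t : ℝ, 0 ≤ t • x + t ^ 2 • y) : x = 0 := by
  have key : ∀ z : A, (∀ t : ℝ, 0 ≤ t • z + t ^ 2 • y) → 0 ≤ z := fun z hz =>
    nonneg_of_forall_pos_le_add_smul (y := y) fun t ht => by
      have := smul_nonneg (inv_pos.2 ht).le (hz t)
      rwa [smul_add, smul_smul, smul_smul, inv_mul_cancel₀ ht.ne', one_smul, sq,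
        ← mul_assoc, inv_mul_cancel₀ ht.ne', one_mul] at this
  refine le_antisymm ?_ (key x h)
  refine neg_nonneg.1 (key (-x) fun t => ?_)
  simpa [smul_neg, ← neg_smul] using h (-t)

variable {Φ : A →ₗ[ℂ] A} {p : A}

theorem one_sub_mul_map_mul_one_sub_eq_of_nonneg (hΦ : ∀ x, 0 ≤ x → 0 ≤ Φ x)
    (hp : IsStarProjection p) (hcorner : ∀ x, p * x * p = x → p * Φ x * p = Φ x)
    {σ : A} (hσ : 0 ≤ σ) :
    (1 - p) * Φ σ * (1 - p) = (1 - p) * Φ ((1 - p) * σ * (1 - p)) * (1 - p) := by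
  set q := 1 - p with hq_def
  have hq : IsStarProjection q := hp.one_sub
  have hpq : p * q = 0 := hp.isIdempotentElem.mul_one_sub_self
  have hqp : q * p = 0 := hp.isIdempotentElem.one_sub_mul_self
  have hdiag : q * Φ (p * σ * p) * q = 0 := by
    have hσp : p * (p * σ * p) * p = p * σ * p := by
      rw [show p * (p * σ * p) * p = p * p * σ * (p * p) by noncomm_ring, hp.isIdempotentElem.eq]
    rw [← hcorner _ hσp, show q * (p * Φ (p * σ * p) * p) * q = q * p * Φ (p * σ * p) * (p * q) by
      noncomm_ring, hqp, hpq, zero_mul, zero_mul]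
  have hoff : q * Φ (p * σ * q + q * σ * p) * q = 0 := by
    refine eq_zero_of_forall_nonneg_smul_add_sq_smul (y := q * Φ (q * σ * q) * q) fun t => ?_
    have hW : IsSelfAdjoint (p + t • q) :=
      hp.isSelfAdjoint.add ((IsSelfAdjoint.all t).smul hq.isSelfAdjoint)
    have h := hq.isSelfAdjoint.conjugate_nonneg (hΦ _ (hW.conjugate_nonneg hσ))
    have hexpand : (p + t • q) * σ * (p + t • q)
        = p * σ * p + t • (p * σ * q + q * σ * p) + t ^ 2 • (q * σ * q) := by
      simp only [add_mul, mul_add, smul_mul_assoc, mul_smul_comm, smul_add, smul_smul, sq]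
      abel
    rwa [hexpand, map_add, map_add, LinearMap.map_smul_of_tower, LinearMap.map_smul_of_tower,
      mul_add, mul_add, add_mul, add_mul, hdiag, zero_add, mul_smul_comm, mul_smul_comm,
      smul_mul_assoc, smul_mul_assoc] at h
  have hsplit : σ = p * σ * p + (p * σ * q + q * σ * p) + q * σ * q := by
    rw [show p = 1 - q by rw [hq_def, sub_sub_cancel]]
    noncomm_ring
  conv_lhs => rw [hsplit, map_add, map_add, mul_add, mul_add, add_mul, add_mul, hdiag, hoff]
  rw [zero_add, zero_add]

theorem one_sub_mul_map_mul_one_sub_eq (hΦ : ∀ x, 0 ≤ x → 0 ≤ Φ x)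
    (hp : IsStarProjection p) (hcorner : ∀ x, p * x * p = x → p * Φ x * p = Φ x) (x : A) :
    (1 - p) * Φ x * (1 - p) = (1 - p) * Φ ((1 - p) * x * (1 - p)) * (1 - p) := by
  let compress : A →ₗ[ℂ] A := LinearMap.mulLeft ℂ (1 - p) ∘ₗ LinearMap.mulRight ℂ (1 - p)
  have h := LinearMap.ext_on (f := compress ∘ₗ Φ) (g := compress ∘ₗ Φ ∘ₗ compress)
    CStarAlgebra.span_nonneg fun σ hσ => by
      simpa [compress, mul_assoc] using one_sub_mul_map_mul_one_sub_eq_of_nonneg hΦ hp hcorner hσ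
  simpa [compress, mul_assoc] using LinearMap.congr_fun h x

end CStarAlgebra

theorem HasDerivAt.eq_of_eqOn_Ici {E : Type*} [NormedAddCommGroup E] [NormedSpace ℝ E]
    {f g : ℝ → E} {f' g' : E} {a : ℝ} (hf : HasDerivAt f f' a) (hg : HasDerivAt g g' a)
    (hfg : EqOn f g (Ici a)) : f' = g' :=
  (uniqueDiffOn_Ici a a self_mem_Ici).eq_deriv _ hf.hasDerivWithinAt
    (hg.hasDerivWithinAt.congr (fun _ hx => hfg hx) (hfg self_mem_Ici))

theorem hasDerivAt_exp_neg_mul_smul {E : Type*} [NormedAddCommGroup E] [NormedSpace ℂ E]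
    (c : ℝ) (v : E) (s : ℝ) :
    HasDerivAt (fun t : ℝ => (Real.exp (-(c * t)) : ℂ) • v)
      ((-(c * Real.exp (-(c * s))) : ℝ) • v) s := by
  have hexp : HasDerivAt (fun t : ℝ => Real.exp (-(c * t))) (-(c * Real.exp (-(c * s)))) s := by
    simpa [mul_comm] using ((hasDerivAt_id s).const_mul c).neg.exp
  simpa only [Complex.coe_smul] using hexp.smul_const v

theorem LinearMap.eqOn_Ici_of_hasDerivAt {E : Type*} [NormedAddCommGroup E] [NormedSpace ℂ E]
    [FiniteDimensional ℂ E] (G : E →ₗ[ℂ] E) {f g : ℝ → E}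
    (hf : ∀ s, 0 ≤ s → HasDerivAt f (G (f s)) s) (hg : ∀ s, 0 ≤ s → HasDerivAt g (G (g s)) s)
    (h0 : f 0 = g 0) : EqOn f g (Ici 0) := fun _ ht =>
  ODE_solution_unique (v := fun _ => G) (fun _ => (LinearMap.toContinuousLinearMap G).lipschitz)
    (fun s hs => (hf s hs.1).continuousAt.continuousWithinAt)
    (fun s hs => (hf s hs.1).hasDerivWithinAt)
    (fun s hs => (hg s hs.1).continuousAt.continuousWithinAt)
    (fun s hs => (hg s hs.1).hasDerivWithinAt) h0 ⟨ht, le_rfl⟩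

section Matrix

variable {ι : Type*} [Fintype ι] [DecidableEq ι]

theorem IsCompletelyPositive.posSemidef_map_s18 {Φ : Matrix ι ι ℂ →ₗ[ℂ] Matrix ι ι ℂ}
    (hΦ : IsCompletelyPositive Φ) {x : Matrix ι ι ℂ} (hx : x.PosSemidef) : (Φ x).PosSemidef := by
  have h := (hΦ 1 (x.submatrix Prod.snd Prod.snd) (hx.submatrix _)).submatrix
    fun i => ((0 : Fin 1), i)
  convert h using 1
  ext i j
  rfl

theorem hasDerivAt_matrix_of_entrywise {F : ℝ → Matrix ι ι ℂ} {F' : Matrix ι ι ℂ} {s : ℝ}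
    (h : ∀ i j, HasDerivAt (fun t => F t i j) (F' i j) s) : HasDerivAt F F' s := by
  have hsum : ∀ M : Matrix ι ι ℂ, ∑ i, ∑ j, M i j • single i j (1 : ℂ) = M := fun M => by
    conv_rhs => rw [matrix_eq_sum_single M]
    simp [smul_single]
  have hD : HasDerivAt (fun t => ∑ i, ∑ j, F t i j • single i j (1 : ℂ))
      (∑ i, ∑ j, F' i j • single i j (1 : ℂ)) s :=
    HasDerivAt.fun_sum fun i _ => HasDerivAt.fun_sum fun j _ => (h i j).smul_const _
  simpa only [hsum] using hD

theorem hasDerivAt_compress_sub_half_anticomm {F : ℝ → Matrix ι ι ℂ} {X q : Matrix ι ι ℂ} {s : ℝ}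
    (hq : IsIdempotentElem q) (hF : HasDerivAt F (X - (1 / 2 : ℂ) • (q * F s + F s * q)) s) :
    HasDerivAt (fun t => q * F t * q) (q * X * q - q * F s * q) s := by
  have hcompress : q * (X - (1 / 2 : ℂ) • (q * F s + F s * q)) * q = q * X * q - q * F s * q := by
    rw [mul_sub, sub_mul, mul_smul_comm, smul_mul_assoc, mul_add, add_mul,
      show q * (q * F s) * q = q * F s * q by rw [← mul_assoc, hq.eq],
      show q * (F s * q) * q = q * F s * q by rw [mul_assoc, mul_assoc, hq.eq, mul_assoc],
      ← two_smul ℂ, smul_smul]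
    norm_num
  simpa only [hcompress] using (hF.const_mul q).mul_const q

variable {T S : ℝ → Matrix ι ι ℂ →ₗ[ℂ] Matrix ι ι ℂ} {L : Matrix ι ι ℂ →ₗ[ℂ] Matrix ι ι ℂ}
  {q : Matrix ι ι ℂ}

theorem compress_generator_eq (hT : ∀ x, HasDerivAt (fun t => T t x) (L x) 0)
    (hcorner : ∀ s, 0 ≤ s → ∀ x, q * T s x * q = q * T s (q * x * q) * q) (x : Matrix ι ι ℂ) :
    q * L x * q = q * L (q * x * q) * q :=
  ((hT x).const_mul q |>.mul_const q).eq_of_eqOn_Ici ((hT _).const_mul q |>.mul_const q)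
    fun s hs => hcorner s hs x

theorem compress_generator_eq_neg_smul (hT : ∀ x, HasDerivAt (fun t => T t x) (L x) 0)
    {ν : Matrix ι ι ℂ} {α : ℝ}
    (hν : ∀ t, 0 ≤ t → q * T t ν * q = (Real.exp (-(α * t)) : ℂ) • ν) :
    q * L ν * q = (-α : ℂ) • ν := by
  simpa using ((hT ν).const_mul q |>.mul_const q).eq_of_eqOn_Ici
    (hasDerivAt_exp_neg_mul_smul α ν 0) fun s hs => hν s hs

theorem compress_orbit_eq_exp_smul (hq : IsIdempotentElem q)
    (hL : ∀ x, q * L x * q = q * L (q * x * q) * q) {ν : Matrix ι ι ℂ} {α : ℝ}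
    (hLν : q * L ν * q = (-α : ℂ) • ν) (hS0 : S 0 = LinearMap.id)
    (hS : ∀ s, 0 ≤ s →
      HasDerivAt (fun t => S t ν) (L (S s ν) - (1 / 2 : ℂ) • (q * S s ν + S s ν * q)) s)
    (hν : q * ν * q = ν) :
    ∀ t, 0 ≤ t → q * S t ν * q = (Real.exp (-((1 + α) * t)) : ℂ) • ν := by
  let G : Matrix ι ι ℂ →ₗ[ℂ] Matrix ι ι ℂ :=
    LinearMap.mulLeft ℂ q ∘ₗ LinearMap.mulRight ℂ q ∘ₗ L - LinearMap.id
  have hG : ∀ x, G x = q * L x * q - x := by simp [G, mul_assoc]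
  have hf : ∀ s, 0 ≤ s → HasDerivAt (fun t => q * S t ν * q) (G (q * S s ν * q)) s :=
    fun s hs => by
      rw [hG, ← hL]
      exact hasDerivAt_compress_sub_half_anticomm hq (hS s hs)
  have hg : ∀ s, 0 ≤ s → HasDerivAt (fun t => (Real.exp (-((1 + α) * t)) : ℂ) • ν)
      (G ((Real.exp (-((1 + α) * s)) : ℂ) • ν)) s := fun s _ => by
    have hGg : G ((Real.exp (-((1 + α) * s)) : ℂ) • ν)
        = (-((1 + α) * Real.exp (-((1 + α) * s))) : ℝ) • ν := by
      rw [hG, map_smul, mul_smul_comm, smul_mul_assoc, hLν, smul_smul, ← sub_smul,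
        ← Complex.coe_smul]
      push_cast
      ring_nf
    rw [hGg]
    exact hasDerivAt_exp_neg_mul_smul (1 + α) ν s
  exact fun t ht => G.eqOn_Ici_of_hasDerivAt hf hg (by simp [hS0, hν]) ht

end Matrix

theorem survival_function_first_jump_general {ι : Type*} [Fintype ι] [DecidableEq ι]
    (T S : ℝ → Matrix ι ι ℂ →ₗ[ℂ] Matrix ι ι ℂ)
    (L : Matrix ι ι ℂ →ₗ[ℂ] Matrix ι ι ℂ)
    (hT0 : T 0 = LinearMap.id)
    (hCP : ∀ t, 0 ≤ t → IsCompletelyPositive (T t))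
    -- `L` is the generator of `T` (entrywise derivative)
    (hgenT : ∀ (x : Matrix ι ι ℂ) (i j : ι) (s : ℝ), 0 ≤ s →
      HasDerivAt (fun t : ℝ => T t x i j) (L (T s x) i j) s)
    (p₀ : Matrix ι ι ℂ) (hproj : p₀ * p₀ = p₀) (hherm : p₀.IsHermitian)
    -- `p₀` is subharmonic: states supported in the range of `p₀` stay there
    (hsub : ∀ t, 0 ≤ t → ∀ ρ : Matrix ι ι ℂ, p₀ * ρ * p₀ = ρ →
      p₀ * T t ρ * p₀ = T t ρ)
    -- `S` is the semigroup generated by `L₀ = L - ½ {p₀^⊥, ·}`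
    (hS0 : S 0 = LinearMap.id)
    (hgenS : ∀ (x : Matrix ι ι ℂ) (i j : ι) (s : ℝ), 0 ≤ s →
      HasDerivAt (fun t : ℝ => S t x i j)
        ((L (S s x)
          - (1 / 2 : ℂ) • ((1 - p₀) * S s x + S s x * (1 - p₀))) i j) s)
    (ν : Matrix ι ι ℂ) (hν1 : ν.trace = 1)
    (hsupp : (1 - p₀) * ν * (1 - p₀) = ν)
    (α : ℝ)
    -- `ν` is a quasi-stationary state with rate `α`
    (hQSS : ∀ t, 0 ≤ t →
      (1 - p₀) * T t ν * (1 - p₀) = (Real.exp (-(α * t)) : ℂ) • ν) :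
    ∀ t, 0 ≤ t →
      Matrix.trace (S t ν * (1 - p₀)) = (Real.exp (-((1 + α) * t)) : ℂ) := by
  set q := 1 - p₀
  have hp₀ : IsStarProjection p₀ := ⟨hproj, hherm⟩
  have hq : IsIdempotentElem q := hp₀.one_sub.isIdempotentElem
  have hT : ∀ x, HasDerivAt (fun t => T t x) (L x) 0 := fun x => by
    simpa [hT0] using hasDerivAt_matrix_of_entrywise fun i j => hgenT x i j 0 le_rfl
  have hcornerT : ∀ s, 0 ≤ s → ∀ x, q * T s x * q = q * T s (q * x * q) * q := fun s hs =>
    one_sub_mul_map_mul_one_sub_eq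
      (fun _ hx => ((hCP s hs).posSemidef_map_s18 hx.posSemidef).nonneg) hp₀ (hsub s hs)
  have hsol := compress_orbit_eq_exp_smul hq
    (compress_generator_eq hT hcornerT) (compress_generator_eq_neg_smul hT hQSS) hS0
    (fun s hs => hasDerivAt_matrix_of_entrywise fun i j => hgenS ν i j s hs) hsupp
  intro t ht
  calc trace (S t ν * q) = trace (q * S t ν * q) := by
        conv_lhs => rw [← hq.eq, ← mul_assoc, trace_mul_comm, ← mul_assoc]
    _ = Real.exp (-((1 + α) * t)) := by simp [hsol t ht, trace_smul, hν1]

/-- If `ν` satisfies `p₀^⊥ T_{t*}(ν) p₀^⊥ = e^{-α t} ν` for all `t ≥ 0`, and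
`S_{t*}` is the semigroup generated by `L_{0*} = L_* - ½{p₀^⊥, ·}`, then the
survival probability of the first jump time is exponential with rate `1 + α`:
`tr(S_{t*}(ν) p₀^⊥) = e^{-(1+α) t}`. -/
theorem survival_function_first_jump {ι : Type*} [Fintype ι] [DecidableEq ι]
    (T S : ℝ → Matrix ι ι ℂ →ₗ[ℂ] Matrix ι ι ℂ)
    (L : Matrix ι ι ℂ →ₗ[ℂ] Matrix ι ι ℂ)
    (hT0 : T 0 = LinearMap.id)
    (hsemT : ∀ t, 0 ≤ t → ∀ s, 0 ≤ s → T (t + s) = (T t).comp (T s))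
    (hTP : ∀ t, 0 ≤ t → ∀ x : Matrix ι ι ℂ, (T t x).trace = x.trace)
    (hCP : ∀ t, 0 ≤ t → IsCompletelyPositive (T t))
    -- `L` is the generator of `T` (entrywise derivative)
    (hgenT : ∀ (x : Matrix ι ι ℂ) (i j : ι) (s : ℝ), 0 ≤ s →
      HasDerivAt (fun t : ℝ => T t x i j) (L (T s x) i j) s)
    (p₀ : Matrix ι ι ℂ) (hproj : p₀ * p₀ = p₀) (hherm : p₀.IsHermitian)
    -- `p₀` is subharmonic: states supported in the range of `p₀` stay there
    (hsub : ∀ t, 0 ≤ t → ∀ ρ : Matrix ι ι ℂ, p₀ * ρ * p₀ = ρ →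
      p₀ * T t ρ * p₀ = T t ρ)
    -- `S` is the semigroup generated by `L₀ = L - ½ {p₀^⊥, ·}`
    (hS0 : S 0 = LinearMap.id)
    (hsemS : ∀ t, 0 ≤ t → ∀ s, 0 ≤ s → S (t + s) = (S t).comp (S s))
    (hgenS : ∀ (x : Matrix ι ι ℂ) (i j : ι) (s : ℝ), 0 ≤ s →
      HasDerivAt (fun t : ℝ => S t x i j)
        ((L (S s x)
          - (1 / 2 : ℂ) • ((1 - p₀) * S s x + S s x * (1 - p₀))) i j) s)
    (ν : Matrix ι ι ℂ) (hν : ν.PosSemidef) (hν1 : ν.trace = 1)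
    (hsupp : (1 - p₀) * ν * (1 - p₀) = ν)
    (α : ℝ) (hα : 0 ≤ α)
    -- `ν` is a quasi-stationary state with rate `α`
    (hQSS : ∀ t, 0 ≤ t →
      (1 - p₀) * T t ν * (1 - p₀) = (Real.exp (-(α * t)) : ℂ) • ν) :
    ∀ t, 0 ≤ t →
      Matrix.trace (S t ν * (1 - p₀)) = (Real.exp (-((1 + α) * t)) : ℂ) :=
  survival_function_first_jump_general T S L hT0 hCP hgenT p₀ hproj hherm hsub hS0 hgenS ν hν1 hsupp
    α hQSS
end
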